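/- Let n ≥ 1, let (B, ≤_B) be a linear order, and for each 1 ≤ i ≤ n let (Aᵢ, ≤_{Aᵢ}) be a linear order, Rᵢ ⊆ Aᵢ × B an interval-preserving relation, and aᵢ ∈ Aᵢ. Let φ ⊆ B and set ψ = φ ∩ ⋂_{1 ≤ i ≤ n} {b ∈ B : Rᵢ⁻¹(b) ≠ ∅}. Then there exists b ∈ φ with (aᵢ, b) ∈ Rᵢ for all i, if and only if for all 1 ≤ i, j ≤ n there exists b ∈ ψ with (aᵢ, b) ∈ Rᵢ and (aⱼ, b) ∈ Rⱼ. -/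
import Mathlib


/-- An interval of a linear order: a set closed under betweenness. -/
def IsInterval {A : Type*} [LinearOrder A] (I : Set A) : Prop :=
  ∀ ⦃a b c : A⦄, a ∈ I → c ∈ I → a ≤ b → b ≤ c → b ∈ I

/-- A relation `R ⊆ A × B` between linear orders is interval-preserving if
the image of every interval of `A` is an interval of `(R(A), ≤_B)`, and the
preimage of every interval of `B` is an interval of `(R⁻¹(B), ≤_A)`. -/
def IntervalPreserving {A B : Type*} [LinearOrder A] [LinearOrder B]
    (R : A → B → Prop) : Prop :=
  (∀ I : Set A, IsInterval I → ∀ b1 b b2 : B,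
      (∃ a ∈ I, R a b1) → (∃ a ∈ I, R a b2) → (∃ a, R a b) →
      b1 ≤ b → b ≤ b2 → ∃ a ∈ I, R a b) ∧
  (∀ J : Set B, IsInterval J → ∀ a1 a a2 : A,
      (∃ b ∈ J, R a1 b) → (∃ b ∈ J, R a2 b) → (∃ b, R a b) →
      a1 ≤ a → a ≤ a2 → ∃ b ∈ J, R a b)

private lemma singleton_isInterval {A : Type*} [LinearOrder A] (x : A) :
    IsInterval ({x} : Set A) := by
  intro p q r hp hr hpq hqr
  simp only [Set.mem_singleton_iff] at hp hr ⊢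
  subst hp; subst hr
  exact le_antisymm hqr hpq

private lemma key {A B : Type*} [LinearOrder A] [LinearOrder B]
    {R : A → B → Prop} (h : IntervalPreserving R) (a : A) {b1 b b2 : B}
    (h1 : R a b1) (h2 : R a b2) (hb : ∃ a', R a' b)
    (l1 : b1 ≤ b) (l2 : b ≤ b2) : R a b := by
  obtain ⟨x, hx, hxr⟩ := h.1 {a} (singleton_isInterval a) b1 b b2
    ⟨a, rfl, h1⟩ ⟨a, rfl, h2⟩ hb l1 l2
  rw [Set.mem_singleton_iff] at hx
  exact hx ▸ hxr

theorem exists_common_image_iff_pairwise (n : ℕ) (hn : 1 ≤ n)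
    {B : Type*} [LinearOrder B]
    (A : Fin n → Type*) [∀ i, LinearOrder (A i)]
    (R : ∀ i, A i → B → Prop) (hR : ∀ i, IntervalPreserving (R i))
    (a : ∀ i, A i) (φ : Set B) :
    (∃ b ∈ φ, ∀ i, R i (a i) b) ↔
      ∀ i j, ∃ b, (b ∈ φ ∧ ∀ k, ∃ a', R k a' b) ∧ R i (a i) b ∧ R j (a j) b := by
  constructor
  · rintro ⟨b, hb, hall⟩ i j
    exact ⟨b, ⟨hb, fun k => ⟨a k, hall k⟩⟩, hall i, hall j⟩
  · intro h
    choose f hc hfi hfj using h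
    have hne : (Finset.univ : Finset (Fin n)).Nonempty :=
      ⟨⟨0, hn⟩, Finset.mem_univ _⟩
    -- for each k, pick g k minimizing f k ·
    have hmin : ∀ k : Fin n, ∃ jk : Fin n, ∀ j, f k jk ≤ f k j := by
      intro k
      obtain ⟨jk, _, hjk⟩ := Finset.exists_min_image Finset.univ (f k) hne
      exact ⟨jk, fun j => hjk j (Finset.mem_univ j)⟩
    choose g hg using hmin
    -- pick k0 maximizing k ↦ f k (g k)
    obtain ⟨k0, _, hk0⟩ :=
      Finset.exists_max_image Finset.univ (fun k => f k (g k)) hne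
    refine ⟨f k0 (g k0), (hc k0 (g k0)).1, fun k => ?_⟩
    exact key (hR k) (a k) (hfi k (g k)) (hfj k0 k)
      ((hc k0 (g k0)).2 k) (hk0 k (Finset.mem_univ k)) (hg k0 k)
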